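/- arXiv:2301.00557 — 4 statements merged into one kernel-verified Lean document; each statement's English description precedes it below -/
import Mathlib

section
/- The estimator I_i^n = (1/n) ∑_{j=1}^n D_KL( p(y | x_s, x_i^j) ‖ (1/n) ∑_{l=1}^n p(y | x_s, x_i^l) ), where x_i^1, ..., x_i^n are i.i.d. samples from p(x_i | x_s), converges almost surely to the conditional mutual information I(y; x_i | x_s) as n → ∞. -/
open MeasureTheory ProbabilityTheory Filter Topology Finset

/-!
Both the estimator and its normalising mixture are averages over the samples, so the estimator is
the mutual information functional evaluated at the empirical frequencies `c n` of the values
instead of at `w`. The strong law of large numbers, applied to the indicator of each of the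
finitely many values, gives `c n → w` almost surely, and the functional is continuous at `w`
because the mixture `∑ v, w v * P v y` is positive.
-/

noncomputable section

variable {V Y : Type*}

def empiricalFreq [DecidableEq V] (x : ℕ → V) (n : ℕ) (v : V) : ℝ :=
  #{j ∈ range n | x j = v} / n

/-- `I(y; x_i | x_s)` for `w = p(x_i | x_s)` and `P v = p(y | x_s, x_i = v)`. -/
def mixtureMutualInfo [Fintype V] [Fintype Y] (w : V → ℝ) (P : V → Y → ℝ) : ℝ :=
  ∑ v, w v * ∑ y, P v y * Real.log (P v y / ∑ v', w v' * P v' y)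

theorem average_comp_eq_sum_empiricalFreq [Fintype V] [DecidableEq V] (x : ℕ → V) (n : ℕ)
    (g : V → ℝ) :
    1 / (n : ℝ) * ∑ j ∈ range n, g (x j) = ∑ v, empiricalFreq x n v * g v := by
  rw [← sum_fiberwise (range n) x, mul_sum]
  refine sum_congr rfl fun v _ ↦ ?_
  rw [sum_congr rfl fun j hj ↦ congrArg g (mem_filter.1 hj).2, sum_const, nsmul_eq_mul,
    empiricalFreq]
  ring

theorem average_divergence_eq_mixtureMutualInfo_empiricalFreq [Fintype V] [Fintype Y]
    [DecidableEq V] (P : V → Y → ℝ) (x : ℕ → V) (n : ℕ) :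
    1 / (n : ℝ) * ∑ j ∈ range n, ∑ y,
        P (x j) y * Real.log (P (x j) y / (1 / (n : ℝ) * ∑ l ∈ range n, P (x l) y)) =
      mixtureMutualInfo (empiricalFreq x n) P := by
  have hmix : ∀ y, 1 / (n : ℝ) * ∑ l ∈ range n, P (x l) y = ∑ v, empiricalFreq x n v * P v y :=
    fun y ↦ average_comp_eq_sum_empiricalFreq x n (P · y)
  simp only [hmix]
  exact average_comp_eq_sum_empiricalFreq x n
    fun v ↦ ∑ y, P v y * Real.log (P v y / ∑ v', empiricalFreq x n v' * P v' y)

theorem mixture_pos [Fintype V] {w : V → ℝ} (hw_pos : ∀ v, 0 < w v) (hw_sum : ∑ v, w v = 1)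
    {P : V → Y → ℝ} (hP_pos : ∀ v y, 0 < P v y) (y : Y) : 0 < ∑ v, w v * P v y :=
  sum_pos (fun v _ ↦ mul_pos (hw_pos v) (hP_pos v y))
    (nonempty_of_sum_ne_zero (hw_sum.trans_ne one_ne_zero))

theorem continuousAt_mixtureMutualInfo [Fintype V] [Fintype Y] {w : V → ℝ} {P : V → Y → ℝ}
    (hP : ∀ v y, P v y ≠ 0) (hmix : ∀ y, ∑ v, w v * P v y ≠ 0) :
    ContinuousAt (fun d ↦ mixtureMutualInfo d P) w := by
  have hmix_cont : ∀ y, Continuous fun d : V → ℝ ↦ ∑ v, d v * P v y :=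
    fun y ↦ continuous_finsetSum _ fun v _ ↦ by fun_prop
  have hlog : ∀ v y, ContinuousAt (fun d : V → ℝ ↦ Real.log (P v y / ∑ v', d v' * P v' y)) w :=
    fun v y ↦ (continuousAt_const.div (hmix_cont y).continuousAt (hmix y)).log
      (div_ne_zero (hP v y) (hmix y))
  exact tendsto_finsetSum _ fun v _ ↦ (continuous_apply v).continuousAt.mul <|
    tendsto_finsetSum _ fun y _ ↦ continuousAt_const.mul (hlog v y)

theorem identDistrib_of_measure_preimage_singleton {Ω : Type*} [MeasurableSpace Ω]
    {μ : Measure Ω} [Countable V] [MeasurableSpace V] [MeasurableSingletonClass V]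
    {X X' : Ω → V} (hX : Measurable X) (hX' : Measurable X')
    (h : ∀ v, μ (X ⁻¹' {v}) = μ (X' ⁻¹' {v})) : IdentDistrib X X' μ μ where
  aemeasurable_fst := hX.aemeasurable
  aemeasurable_snd := hX'.aemeasurable
  map_eq := Measure.ext_of_singleton fun v ↦ by
    rw [Measure.map_apply hX (measurableSet_singleton v),
      Measure.map_apply hX' (measurableSet_singleton v), h]

theorem ae_tendsto_empiricalFreq [DecidableEq V] [MeasurableSpace V] [MeasurableSingletonClass V]
    {Ω : Type*} [MeasurableSpace Ω] {μ : Measure Ω} [IsFiniteMeasure μ]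
    {X : ℕ → Ω → V} (hX_meas : ∀ n, Measurable (X n))
    (hX_indep : Pairwise fun i j ↦ IndepFun (X i) (X j) μ)
    (hX_ident : ∀ n, IdentDistrib (X n) (X 0) μ μ) (v : V) :
    ∀ᵐ ω ∂μ, Tendsto (fun n ↦ empiricalFreq (X · ω) n v) atTop (𝓝 (μ.real (X 0 ⁻¹' {v}))) := by
  have hf : Measurable (({v} : Set V).indicator (1 : V → ℝ)) :=
    measurable_const.indicator (measurableSet_singleton v)
  have hmeas : MeasurableSet (X 0 ⁻¹' {v}) := hX_meas 0 (measurableSet_singleton v)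
  -- `(X n ⁻¹' {v}).indicator 1` is definitionally `{v}.indicator 1 ∘ X n`.
  have h := strong_law_ae_real (fun n ↦ (X n ⁻¹' {v}).indicator (1 : Ω → ℝ))
    ((integrable_const 1).indicator hmeas) (fun i j hij ↦ (hX_indep hij).comp hf hf)
    (fun n ↦ (hX_ident n).comp hf)
  rw [integral_indicator_one hmeas] at h
  classical
  simp only [Set.indicator_apply, Set.mem_preimage, Set.mem_singleton_iff, Pi.one_apply,
    sum_boole] at h
  simpa only [empiricalFreq] using h

end

theorem cmi_estimator_tendsto_cmi_general
    {V Y : Type*} [Fintype V] [Fintype Y] [MeasurableSpace V] [MeasurableSingletonClass V]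
    {Ω : Type*} [MeasurableSpace Ω] (μ : Measure Ω) [IsProbabilityMeasure μ]
    (w : V → ℝ) (hw_pos : ∀ v, 0 < w v) (hw_sum : ∑ v, w v = 1)
    (P : V → Y → ℝ) (hP_pos : ∀ v y, 0 < P v y)
    (X : ℕ → Ω → V) (hX_meas : ∀ n, Measurable (X n))
    (hX_indep : iIndepFun X μ)
    (hX_dist : ∀ n v, μ (X n ⁻¹' {v}) = ENNReal.ofReal (w v)) :
    ∀ᵐ ω ∂μ, Tendsto
      (fun n : ℕ => (1 / (n : ℝ)) * ∑ j ∈ Finset.range n, ∑ y,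
        P (X j ω) y * Real.log (P (X j ω) y /
          ((1 / (n : ℝ)) * ∑ l ∈ Finset.range n, P (X l ω) y)))
      atTop
      (nhds (∑ v, w v * ∑ y, P v y * Real.log (P v y / (∑ v', w v' * P v' y)))) := by
  classical
  have hX_ident : ∀ n, IdentDistrib (X n) (X 0) μ μ := fun n ↦
    identDistrib_of_measure_preimage_singleton (hX_meas n) (hX_meas 0)
      fun v ↦ by rw [hX_dist, hX_dist]
  have hfreq : ∀ v, ∀ᵐ ω ∂μ, Tendsto (fun n ↦ empiricalFreq (X · ω) n v) atTop (𝓝 (w v)) := by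
    intro v
    have h := ae_tendsto_empiricalFreq hX_meas (fun i j hij ↦ hX_indep.indepFun hij) hX_ident v
    rwa [measureReal_def, hX_dist, ENNReal.toReal_ofReal (hw_pos v).le] at h
  filter_upwards [ae_all_iff.2 hfreq] with ω hω
  simp only [average_divergence_eq_mixtureMutualInfo_empiricalFreq]
  exact (continuousAt_mixtureMutualInfo (fun v y ↦ (hP_pos v y).ne')
    fun y ↦ (mixture_pos hw_pos hw_sum hP_pos y).ne').tendsto.comp (tendsto_pi_nhds.2 hω)

/-- The CMI estimator `I_i^n = (1/n) ∑ⱼ D_KL(p(y|x_s,x_i^j) ‖ (1/n) ∑ₗ p(y|x_s,x_i^l))`,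
with `x_i^1, x_i^2, ...` i.i.d. samples from `p(x_i | x_s)` (pmf `w` on a finite set `V`),
converges almost surely to `I(y; x_i | x_s) = ∑ᵥ w v * D_KL(P v ‖ ∑ᵥ' w v' * P v')`,
where `P v = p(y | x_s, x_i = v)`. -/
theorem cmi_estimator_tendsto_cmi
    {V Y : Type*} [Fintype V] [Fintype Y] [MeasurableSpace V] [MeasurableSingletonClass V]
    {Ω : Type*} [MeasurableSpace Ω] (μ : Measure Ω) [IsProbabilityMeasure μ]
    (w : V → ℝ) (hw_pos : ∀ v, 0 < w v) (hw_sum : ∑ v, w v = 1)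
    (P : V → Y → ℝ) (hP_pos : ∀ v y, 0 < P v y) (hP_sum : ∀ v, ∑ y, P v y = 1)
    (X : ℕ → Ω → V) (hX_meas : ∀ n, Measurable (X n))
    (hX_indep : iIndepFun X μ)
    (hX_dist : ∀ n v, μ (X n ⁻¹' {v}) = ENNReal.ofReal (w v)) :
    ∀ᵐ ω ∂μ, Tendsto
      (fun n : ℕ => (1 / (n : ℝ)) * ∑ j ∈ Finset.range n, ∑ y,
        P (X j ω) y * Real.log (P (X j ω) y /
          ((1 / (n : ℝ)) * ∑ l ∈ Finset.range n, P (X l ω) y)))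
      atTop
      (nhds (∑ v, w v * ∑ y, P v y * Real.log (P v y / (∑ v', w v' * P v' y)))) :=
  cmi_estimator_tendsto_cmi_general μ w hw_pos hw_sum P hP_pos X hX_meas hX_indep hX_dist
end

section
/- In the discrete classification setting with cross-entropy loss, the global optimum of the joint objective L(f, π) = E_{x,y} E_s E_{i∼π(x_s)}[ℓ(f(x_s ∪ x_i), y)] over predictors f and stochastic policies π is achieved by the Bayes classifier f*(x_s) = p(y | x_s) together with any policy placing all probability mass on argmax_i I(y; x_i | x_s); if the maximizing index is unique for every subset s with positive probability, the optimal policy is unique. -/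
noncomputable section

/-- The set of full feature vectors agreeing with `x` on the subset `s`. -/
def agreeSet7 {d : ℕ} {V : Type*} [Fintype V] [DecidableEq V]
    (s : Finset (Fin d)) (x : Fin d → V) : Finset (Fin d → V) :=
  Finset.univ.filter fun x' => ∀ i ∈ s, x' i = x i

/-- The Bayes classifier: conditional pmf `p(y | x_s)`. -/
def bayes7 {d : ℕ} {V Y : Type*} [Fintype V] [DecidableEq V] [Fintype Y]
    (p : (Fin d → V) → Y → ℝ) (s : Finset (Fin d)) (x : Fin d → V) (y : Y) : ℝ :=
  (∑ x' ∈ agreeSet7 s x, p x' y) / (∑ x' ∈ agreeSet7 s x, ∑ y', p x' y')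

/-- Expected posterior entropy of querying feature `i` given observed values `x_s`:
`E_{x_i | x_s}[H(y | x_i, x_s)] = H(y | x_s) - I(y; x_i | x_s)`, so minimizing this cost
over `i` is the same as maximizing the conditional mutual information `I(y; x_i | x_s)`. -/
def cost7 {d : ℕ} {V Y : Type*} [Fintype V] [DecidableEq V] [Fintype Y]
    (p : (Fin d → V) → Y → ℝ) (s : Finset (Fin d)) (x : Fin d → V) (i : Fin d) : ℝ :=
  ∑ x' ∈ agreeSet7 s x,
    ((∑ y, p x' y) / (∑ x'' ∈ agreeSet7 s x, ∑ y, p x'' y)) *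
      (-∑ y, bayes7 p (insert i s) x' y * Real.log (bayes7 p (insert i s) x' y))

/-- The joint objective `L(f, π) = E_{x,y} E_s E_{i ∼ π(x_s)} [ℓ(f(x_s ∪ x_i), y)]` with
cross-entropy loss `ℓ(ŷ, y) = -log ŷ_y`. -/
def obj7 {d : ℕ} {V Y : Type*} [Fintype V] [DecidableEq V] [Fintype Y]
    (p : (Fin d → V) → Y → ℝ) (ps : Finset (Fin d) → ℝ)
    (f : Finset (Fin d) → (Fin d → V) → Y → ℝ)
    (π : Finset (Fin d) → (Fin d → V) → Fin d → ℝ) : ℝ :=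
  ∑ x, ∑ y, p x y * ∑ s, ps s * ∑ i, π s x i * (-Real.log (f (insert i s) x y))

/-! Both parts rest on one tower identity: a sum over `x` is unchanged when each summand is replaced
by its average over the class `agreeSet7 s x`, weighted by the marginal `∑ y, p x y`. With it, the
cross-entropy of any predictor at the query `s ∪ {i}` becomes a cross-entropy against the Bayes
posterior, which Gibbs' inequality bounds by the posterior entropy, with equality for the Bayes
classifier; averaging that entropy over the class of `x_s` gives `cost7`. So at each `s` the loss is
at least the marginal-weighted mean of the policy's expected `cost7`, and a policy supported on
cost minimizers minimizes that mean pointwise in `x`. If the minimizer is unique, equal objectives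
force equality at every `s` with `ps s > 0` and every `x`, which puts all of `π`'s mass on it. -/

open Finset

section Generic

open Real

variable {ι : Type*} [Fintype ι]

theorem mul_log_le_mul_log_add_sub {b g : ℝ} (hb : 0 ≤ b) (hg : 0 < g) :
    b * log g ≤ b * log b + (g - b) := by
  rcases hb.eq_or_lt with rfl | hb
  · simpa using hg.le
  have h := log_le_sub_one_of_pos (div_pos hg hb)
  rw [log_div hg.ne' hb.ne'] at h
  have : b * (log g - log b) ≤ b * (g / b - 1) := mul_le_mul_of_nonneg_left h hb.le
  rw [mul_sub, mul_sub, mul_div_cancel₀ _ hb.ne', mul_one] at this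
  linarith

theorem sum_mul_neg_log_self_le {b g : ι → ℝ} (hb : ∀ i, 0 ≤ b i) (hg : ∀ i, 0 < g i)
    (hsum : ∑ i, g i ≤ ∑ i, b i) :
    ∑ i, b i * -log (b i) ≤ ∑ i, b i * -log (g i) := by
  have h := sum_le_sum fun i (_ : i ∈ univ) => mul_log_le_mul_log_add_sub (hb i) (hg i)
  rw [sum_add_distrib, sum_sub_distrib] at h
  simp only [mul_neg, sum_neg_distrib]
  linarith

theorem sum_mul_le_of_forall_ne_zero {σ c : ι → ℝ} {a : ℝ} (hσ : σ ∈ stdSimplex ℝ ι)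
    (h : ∀ i, σ i ≠ 0 → c i ≤ a) : ∑ i, σ i * c i ≤ a := by
  calc ∑ i, σ i * c i ≤ ∑ i, σ i * a := by
        refine sum_le_sum fun i _ => ?_
        by_cases hi : σ i = 0
        · simp [hi]
        · exact mul_le_mul_of_nonneg_left (h i hi) (hσ.1 i)
    _ = a := by rw [← sum_mul, hσ.2, one_mul]

theorem le_sum_mul_of_forall_ne_zero {σ c : ι → ℝ} {a : ℝ} (hσ : σ ∈ stdSimplex ℝ ι)
    (h : ∀ i, σ i ≠ 0 → a ≤ c i) : a ≤ ∑ i, σ i * c i := by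
  simpa using sum_mul_le_of_forall_ne_zero (c := fun i => -c i) (a := -a) hσ
    fun i hi => neg_le_neg (h i hi)

theorem sum_mul_le_sum_mul_of_support {σ τ c : ι → ℝ} (hσ : σ ∈ stdSimplex ℝ ι)
    (hτ : τ ∈ stdSimplex ℝ ι) (h : ∀ i j, τ i ≠ 0 → σ j ≠ 0 → c i ≤ c j) :
    ∑ i, τ i * c i ≤ ∑ i, σ i * c i :=
  le_sum_mul_of_forall_ne_zero hσ fun j hj =>
    sum_mul_le_of_forall_ne_zero hτ fun i hi => h i j hi hj

theorem eq_ite_of_sum_mul_le [DecidableEq ι] {σ c : ι → ℝ} {k : ι} (hσ : σ ∈ stdSimplex ℝ ι)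
    (hc : ∀ j, σ j ≠ 0 → j ≠ k → c k < c j) (hle : ∑ i, σ i * c i ≤ c k) (i : ι) :
    σ i = if i = k then 1 else 0 := by
  have hzero : ∀ j ≠ k, σ j = 0 := by
    intro j hjk
    by_contra hj
    have hlt : ∑ i, σ i * c k < ∑ i, σ i * c i := by
      refine sum_lt_sum (fun i _ => ?_) ⟨j, mem_univ j, ?_⟩
      · by_cases hi : σ i = 0
        · simp [hi]
        · rcases eq_or_ne i k with rfl | hik
          · rfl
          · exact mul_le_mul_of_nonneg_left (hc i hi hik).le (hσ.1 i)
      · exact mul_lt_mul_of_pos_left (hc j hj hjk) ((hσ.1 j).lt_of_ne' hj)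
    rw [← sum_mul, hσ.2, one_mul] at hlt
    linarith
  split_ifs with hik
  · rw [← hσ.2, sum_eq_single k (fun j _ hjk => hzero j hjk) (by simp), hik]
  · exact hzero i hik

theorem sum_mul_fiber_sum_div_fiber_sum {β : Type*} [Fintype β] [DecidableEq β] (r : ι → β)
    {m : ι → ℝ} (hm : ∀ i, 0 < m i) (φ : ι → ℝ) :
    ∑ i, m i * ((∑ j with r j = r i, φ j) / ∑ j with r j = r i, m j) = ∑ i, φ i := by
  rw [← sum_fiberwise univ r, ← sum_fiberwise univ r φ]
  refine sum_congr rfl fun b _ => ?_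
  rcases (univ.filter fun j => r j = b).eq_empty_or_nonempty with hb | hb
  · simp [hb]
  have hM : 0 < ∑ j with r j = b, m j := sum_pos (fun j _ => hm j) hb
  calc ∑ i with r i = b, m i * ((∑ j with r j = r i, φ j) / ∑ j with r j = r i, m j)
      = ∑ i with r i = b, m i * ((∑ j with r j = b, φ j) / ∑ j with r j = b, m j) :=
        sum_congr rfl fun i hi => by rw [(mem_filter.1 hi).2]
    _ = ∑ j with r j = b, φ j := by rw [← sum_mul, mul_div_cancel₀ _ hM.ne']

end Generic

theorem sum_marginal_pos {α Y : Type*} [Fintype Y] [Nonempty Y] {p : α → Y → ℝ}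
    (hp : ∀ x y, 0 < p x y) (x : α) : 0 < ∑ y, p x y :=
  sum_pos (fun y _ => hp x y) univ_nonempty

section Classification

variable {d : ℕ} {V Y : Type*} [Fintype V] [DecidableEq V] [Fintype Y]

theorem agreeSet7_eq_filter_restrict (s : Finset (Fin d)) (x : Fin d → V) :
    agreeSet7 s x = univ.filter fun x' => s.restrict x' = s.restrict x := by
  ext x'
  simp [agreeSet7, funext_iff]

theorem dependsOn_agreeSet7 (s : Finset (Fin d)) : DependsOn (agreeSet7 (V := V) s) s :=
  fun x x' h => by
    ext x''
    simp only [agreeSet7, mem_filter, mem_univ, true_and]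
    exact forall₂_congr fun i hi => by rw [h i hi]

theorem dependsOn_bayes7 (p : (Fin d → V) → Y → ℝ) (s : Finset (Fin d)) :
    DependsOn (bayes7 p s) s := fun x x' h => by
  ext y
  simp only [bayes7, dependsOn_agreeSet7 s h]

theorem sum_mul_agreeSet7_sum_div {m : (Fin d → V) → ℝ} (hm : ∀ x, 0 < m x)
    (s : Finset (Fin d)) (φ : (Fin d → V) → ℝ) :
    ∑ x, m x * ((∑ x' ∈ agreeSet7 s x, φ x') / ∑ x' ∈ agreeSet7 s x, m x') = ∑ x, φ x := by
  simpa only [agreeSet7_eq_filter_restrict] using sum_mul_fiber_sum_div_fiber_sum s.restrict hm φ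

theorem sum_sum_mul_eq_sum_sum_bayes7_mul [Nonempty Y] {p : (Fin d → V) → Y → ℝ}
    (hp : ∀ x y, 0 < p x y) {s : Finset (Fin d)} {ψ : (Fin d → V) → Y → ℝ} (hψ : DependsOn ψ s) :
    ∑ x, ∑ y, p x y * ψ x y = ∑ x, (∑ y, p x y) * ∑ y, bayes7 p s x y * ψ x y := by
  rw [← sum_mul_agreeSet7_sum_div (sum_marginal_pos hp) s]
  refine sum_congr rfl fun x _ => congrArg _ ?_
  have hA : ∀ x' ∈ agreeSet7 s x, ∑ y, p x' y * ψ x' y = ∑ y, p x' y * ψ x y :=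
    fun x' hx' => by rw [hψ fun i hi => (mem_filter.1 hx').2 i hi]
  rw [sum_congr rfl hA, sum_comm, sum_div]
  simp only [bayes7, ← sum_mul, div_mul_eq_mul_div]

theorem sum_bayes7 [Nonempty Y] {p : (Fin d → V) → Y → ℝ} (hp : ∀ x y, 0 < p x y)
    (s : Finset (Fin d)) (x : Fin d → V) : ∑ y, bayes7 p s x y = 1 := by
  simp only [bayes7, ← sum_div]
  have hx : x ∈ agreeSet7 s x := by simp [agreeSet7]
  rw [sum_comm, div_self (sum_pos (fun x' _ => sum_marginal_pos hp x') ⟨x, hx⟩).ne']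

theorem bayes7_nonneg {p : (Fin d → V) → Y → ℝ} (hp : ∀ x y, 0 < p x y)
    (s : Finset (Fin d)) (x : Fin d → V) (y : Y) : 0 ≤ bayes7 p s x y :=
  div_nonneg (sum_nonneg fun x' _ => (hp x' y).le)
    (sum_nonneg fun x' _ => sum_nonneg fun y' _ => (hp x' y').le)

theorem sum_marginal_mul_cost7 [Nonempty Y] {p : (Fin d → V) → Y → ℝ} (hp : ∀ x y, 0 < p x y)
    {s : Finset (Fin d)} {w : (Fin d → V) → ℝ} (hw : DependsOn w s) (i : Fin d) :
    ∑ x, (∑ y, p x y) * (w x * cost7 p s x i) = ∑ x, (∑ y, p x y) *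
      (w x * ∑ y, bayes7 p (insert i s) x y * -Real.log (bayes7 p (insert i s) x y)) := by
  rw [← sum_mul_agreeSet7_sum_div (sum_marginal_pos hp) s (fun x => (∑ y, p x y) *
    (w x * ∑ y, bayes7 p (insert i s) x y * -Real.log (bayes7 p (insert i s) x y)))]
  refine sum_congr rfl fun x _ => congrArg _ ?_
  have hA : ∀ x' ∈ agreeSet7 s x, w x' = w x :=
    fun x' hx' => hw fun j hj => (mem_filter.1 hx').2 j hj
  rw [cost7, mul_sum, sum_div]
  refine sum_congr rfl fun x' hx' => ?_
  rw [hA x' hx']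
  simp only [mul_neg, sum_neg_distrib]
  ring

/-- `E_{x,y} E_{i ∼ σ(x_s)} [ℓ(f(x_s ∪ x_i), y)]`, the summand of `obj7` at `s`. -/
def riskAt (p : (Fin d → V) → Y → ℝ) (f : Finset (Fin d) → (Fin d → V) → Y → ℝ)
    (σ : (Fin d → V) → Fin d → ℝ) (s : Finset (Fin d)) : ℝ :=
  ∑ x, ∑ y, p x y * ∑ i, σ x i * -Real.log (f (insert i s) x y)

def policyCost (p : (Fin d → V) → Y → ℝ) (s : Finset (Fin d)) (σ : (Fin d → V) → Fin d → ℝ)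
    (x : Fin d → V) : ℝ :=
  ∑ i, σ x i * cost7 p s x i

theorem obj7_eq_sum_riskAt (p : (Fin d → V) → Y → ℝ) (ps : Finset (Fin d) → ℝ)
    (f : Finset (Fin d) → (Fin d → V) → Y → ℝ) (π : Finset (Fin d) → (Fin d → V) → Fin d → ℝ) :
    obj7 p ps f π = ∑ s, ps s * riskAt p f (π s) s := by
  simp only [obj7, riskAt, mul_sum]
  conv_lhs => enter [2, x]; rw [sum_comm]
  rw [sum_comm]
  refine sum_congr rfl fun s _ => sum_congr rfl fun x _ => sum_congr rfl fun y _ =>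
    sum_congr rfl fun i _ => by ring

theorem riskAt_eq_sum_bayes7 [Nonempty Y] {p : (Fin d → V) → Y → ℝ} (hp : ∀ x y, 0 < p x y)
    {f : Finset (Fin d) → (Fin d → V) → Y → ℝ} (hf : ∀ t, DependsOn (f t) t)
    {σ : (Fin d → V) → Fin d → ℝ} {s : Finset (Fin d)} (hσ : DependsOn σ s) :
    riskAt p f σ s = ∑ i, ∑ x, (∑ y, p x y) *
      (σ x i * ∑ y, bayes7 p (insert i s) x y * -Real.log (f (insert i s) x y)) := by
  have hψ (i : Fin d) :
      DependsOn (fun x y => σ x i * -Real.log (f (insert i s) x y)) (insert i s : Finset (Fin d)) :=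
    fun x x' h => by
      beta_reduce
      rw [hσ.mono (coe_subset.2 (subset_insert i s)) h, hf _ h]
  simp only [riskAt, mul_sum]
  conv_lhs => enter [2, x]; rw [sum_comm]
  rw [sum_comm]
  refine sum_congr rfl fun i _ => ?_
  rw [sum_sum_mul_eq_sum_sum_bayes7_mul hp (hψ i)]
  simp only [mul_sum, mul_left_comm]

theorem riskAt_bayes7 [Nonempty Y] {p : (Fin d → V) → Y → ℝ} (hp : ∀ x y, 0 < p x y)
    {σ : (Fin d → V) → Fin d → ℝ} {s : Finset (Fin d)} (hσ : DependsOn σ s) :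
    riskAt p (bayes7 p) σ s = ∑ x, (∑ y, p x y) * policyCost p s σ x := by
  rw [riskAt_eq_sum_bayes7 hp (dependsOn_bayes7 p) hσ]
  have hcost (i : Fin d) := sum_marginal_mul_cost7 hp (w := fun x => σ x i)
    (fun x x' h => congrFun (hσ h) i) i
  rw [sum_congr rfl fun i _ => (hcost i).symm, sum_comm]
  simp only [policyCost, mul_sum]

theorem riskAt_bayes7_le [Nonempty Y] {p : (Fin d → V) → Y → ℝ} (hp : ∀ x y, 0 < p x y)
    {f : Finset (Fin d) → (Fin d → V) → Y → ℝ} (hf_pos : ∀ t x y, 0 < f t x y)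
    (hf_sum : ∀ t x, ∑ y, f t x y = 1) (hf : ∀ t, DependsOn (f t) t)
    {σ : (Fin d → V) → Fin d → ℝ} {s : Finset (Fin d)} (hσ_nonneg : ∀ x i, 0 ≤ σ x i)
    (hσ : DependsOn σ s) : riskAt p (bayes7 p) σ s ≤ riskAt p f σ s := by
  rw [riskAt_eq_sum_bayes7 hp (dependsOn_bayes7 p) hσ, riskAt_eq_sum_bayes7 hp hf hσ]
  refine sum_le_sum fun i _ => sum_le_sum fun x _ => mul_le_mul_of_nonneg_left
    (mul_le_mul_of_nonneg_left ?_ (hσ_nonneg x i)) (sum_marginal_pos hp x).le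
  exact sum_mul_neg_log_self_le (bayes7_nonneg hp _ x) (hf_pos _ x)
    (by rw [hf_sum, sum_bayes7 hp])

theorem riskAt_bayes7_mono [Nonempty Y] {p : (Fin d → V) → Y → ℝ} (hp : ∀ x y, 0 < p x y)
    {σ σ' : (Fin d → V) → Fin d → ℝ} {s : Finset (Fin d)} (hσ : DependsOn σ s)
    (hσ' : DependsOn σ' s) (h : ∀ x, policyCost p s σ' x ≤ policyCost p s σ x) :
    riskAt p (bayes7 p) σ' s ≤ riskAt p (bayes7 p) σ s := by
  rw [riskAt_bayes7 hp hσ, riskAt_bayes7 hp hσ']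
  exact sum_le_sum fun x _ => mul_le_mul_of_nonneg_left (h x) (sum_marginal_pos hp x).le

theorem policyCost_eq_of_riskAt_le [Nonempty Y] {p : (Fin d → V) → Y → ℝ}
    (hp : ∀ x y, 0 < p x y) {f : Finset (Fin d) → (Fin d → V) → Y → ℝ}
    (hf_pos : ∀ t x y, 0 < f t x y) (hf_sum : ∀ t x, ∑ y, f t x y = 1)
    (hf : ∀ t, DependsOn (f t) t) {σ σ' : (Fin d → V) → Fin d → ℝ} {s : Finset (Fin d)}
    (hσ_nonneg : ∀ x i, 0 ≤ σ x i) (hσ : DependsOn σ s) (hσ' : DependsOn σ' s)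
    (h : ∀ x, policyCost p s σ' x ≤ policyCost p s σ x)
    (hrisk : riskAt p f σ s ≤ riskAt p (bayes7 p) σ' s) (x : Fin d → V) :
    policyCost p s σ x = policyCost p s σ' x := by
  have hle : ∀ x ∈ univ,
      (∑ y, p x y) * policyCost p s σ' x ≤ (∑ y, p x y) * policyCost p s σ x :=
    fun x _ => mul_le_mul_of_nonneg_left (h x) (sum_marginal_pos hp x).le
  have heq := (sum_eq_sum_iff_of_le hle).1 (by
    rw [← riskAt_bayes7 hp hσ, ← riskAt_bayes7 hp hσ']
    exact (riskAt_bayes7_mono hp hσ hσ' h).antisymm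
      ((riskAt_bayes7_le hp hf_pos hf_sum hf hσ_nonneg hσ).trans hrisk)) x (mem_univ x)
  exact (mul_left_cancel₀ (sum_marginal_pos hp x).ne' heq).symm

end Classification

theorem global_optimum_classification_general
    {d : ℕ} {V Y : Type*} [Fintype V] [DecidableEq V] [Fintype Y]
    (p : (Fin d → V) → Y → ℝ)
    (hp_pos : ∀ x y, 0 < p x y) (hp_sum : ∑ x, ∑ y, p x y = 1)
    (ps : Finset (Fin d) → ℝ)
    (hps_pos : ∀ s, s ≠ Finset.univ → 0 < ps s)
    (hps_univ : ps Finset.univ = 0)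
    -- an arbitrary valid predictor `f`: a pmf over `Y` depending only on observed values
    (f : Finset (Fin d) → (Fin d → V) → Y → ℝ)
    (hf_pos : ∀ s x y, 0 < f s x y)
    (hf_sum : ∀ s x, ∑ y, f s x y = 1)
    (hf_meas : ∀ s x x', (∀ i ∈ s, x i = x' i) → f s x = f s x')
    -- an arbitrary valid stochastic policy `π`: a pmf over unqueried indices, depending
    -- only on observed values
    (π : Finset (Fin d) → (Fin d → V) → Fin d → ℝ)
    (hπ_nonneg : ∀ s x i, 0 ≤ π s x i)
    (hπ_sum : ∀ s x, s ≠ Finset.univ → ∑ i, π s x i = 1)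
    (hπ_mem : ∀ s x i, s ≠ Finset.univ → i ∈ s → π s x i = 0)
    (hπ_meas : ∀ s x x', (∀ i ∈ s, x i = x' i) → π s x = π s x')
    -- a valid policy `πstar` concentrating all mass on CMI-maximizing indices
    (πstar : Finset (Fin d) → (Fin d → V) → Fin d → ℝ)
    (hπs_nonneg : ∀ s x i, 0 ≤ πstar s x i)
    (hπs_sum : ∀ s x, s ≠ Finset.univ → ∑ i, πstar s x i = 1)
    (hπs_meas : ∀ s x x', (∀ i ∈ s, x i = x' i) → πstar s x = πstar s x')
    (hπs_opt : ∀ s x i, s ≠ Finset.univ → πstar s x i ≠ 0 →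
      i ∉ s ∧ ∀ j, j ∉ s → cost7 p s x i ≤ cost7 p s x j) :
    obj7 p ps (bayes7 p) πstar ≤ obj7 p ps f π ∧
    (∀ istar : Finset (Fin d) → (Fin d → V) → Fin d,
      (∀ s x, s ≠ Finset.univ → istar s x ∉ s ∧
        ∀ j, j ∉ s → j ≠ istar s x → cost7 p s x (istar s x) < cost7 p s x j) →
      obj7 p ps f π = obj7 p ps (bayes7 p) πstar →
      ∀ s x i, s ≠ Finset.univ →
        π s x i = if i = istar s x then 1 else 0) := by
  have : Nonempty Y := by
    by_contra hY
    simp [not_nonempty_iff.1 hY] at hp_sum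
  have hπ s (hs : s ≠ Finset.univ) x : π s x ∈ stdSimplex ℝ (Fin d) :=
    ⟨hπ_nonneg s x, hπ_sum s x hs⟩
  have hπs s (hs : s ≠ Finset.univ) x : πstar s x ∈ stdSimplex ℝ (Fin d) :=
    ⟨hπs_nonneg s x, hπs_sum s x hs⟩
  have hcost s (hs : s ≠ Finset.univ) x : policyCost p s (πstar s) x ≤ policyCost p s (π s) x :=
    sum_mul_le_sum_mul_of_support (hπ s hs x) (hπs s hs x) fun i j hi hj =>
      (hπs_opt s x i hs hi).2 j fun hjs => hj (hπ_mem s x j hs hjs)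
  have hrisk s : ps s * riskAt p (bayes7 p) (πstar s) s ≤ ps s * riskAt p f (π s) s := by
    rcases eq_or_ne s Finset.univ with rfl | hs
    · simp [hps_univ]
    · refine mul_le_mul_of_nonneg_left ?_ (hps_pos s hs).le
      exact (riskAt_bayes7_mono hp_pos (hπ_meas s) (hπs_meas s) (hcost s hs)).trans
        (riskAt_bayes7_le hp_pos hf_pos hf_sum hf_meas (hπ_nonneg s) (hπ_meas s))
  rw [obj7_eq_sum_riskAt, obj7_eq_sum_riskAt]
  refine ⟨sum_le_sum fun s _ => hrisk s, fun istar histar heq s x i hs => ?_⟩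
  have hrisk_eq : riskAt p f (π s) s = riskAt p (bayes7 p) (πstar s) s :=
    (mul_left_cancel₀ (hps_pos s hs).ne'
      ((sum_eq_sum_iff_of_le fun s _ => hrisk s).1 heq.symm s (mem_univ s))).symm
  have hcost_eq := policyCost_eq_of_riskAt_le hp_pos hf_pos hf_sum hf_meas (hπ_nonneg s)
    (hπ_meas s) (hπs_meas s) (hcost s hs) hrisk_eq.le x
  obtain ⟨histar_notMem, histar_lt⟩ := histar s x hs
  refine eq_ite_of_sum_mul_le (hπ s hs x)
    (fun j hj hji => histar_lt j (fun hjs => hj (hπ_mem s x j hs hjs)) hji) ?_ i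
  calc ∑ j, π s x j * cost7 p s x j = policyCost p s (πstar s) x := hcost_eq
    _ ≤ cost7 p s x (istar s x) := sum_mul_le_of_forall_ne_zero (hπs s hs x) fun j hj =>
      (hπs_opt s x j hs hj).2 _ histar_notMem

/-- In the discrete classification setting with cross-entropy loss, the global optimum of
the joint objective over predictors and stochastic policies is achieved by the Bayes
classifier `f*(x_s) = p(y | x_s)` together with any policy concentrating all mass on
`argmax_i I(y; x_i | x_s)` (equivalently, `argmin_i` of the expected posterior entropy
`cost7`); and if the optimizing index is unique for every strict subset, the optimal
policy is the corresponding deterministic one. -/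
theorem global_optimum_classification
    {d : ℕ} {V Y : Type*} [Fintype V] [DecidableEq V] [Fintype Y]
    (p : (Fin d → V) → Y → ℝ)
    (hp_pos : ∀ x y, 0 < p x y) (hp_sum : ∑ x, ∑ y, p x y = 1)
    (ps : Finset (Fin d) → ℝ)
    (hps_nonneg : ∀ s, 0 ≤ ps s)
    (hps_pos : ∀ s, s ≠ Finset.univ → 0 < ps s)
    (hps_univ : ps Finset.univ = 0)
    (hps_sum : ∑ s, ps s = 1)
    -- an arbitrary valid predictor `f`: a pmf over `Y` depending only on observed values
    (f : Finset (Fin d) → (Fin d → V) → Y → ℝ)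
    (hf_pos : ∀ s x y, 0 < f s x y)
    (hf_sum : ∀ s x, ∑ y, f s x y = 1)
    (hf_meas : ∀ s x x', (∀ i ∈ s, x i = x' i) → f s x = f s x')
    -- an arbitrary valid stochastic policy `π`: a pmf over unqueried indices, depending
    -- only on observed values
    (π : Finset (Fin d) → (Fin d → V) → Fin d → ℝ)
    (hπ_nonneg : ∀ s x i, 0 ≤ π s x i)
    (hπ_sum : ∀ s x, s ≠ Finset.univ → ∑ i, π s x i = 1)
    (hπ_mem : ∀ s x i, s ≠ Finset.univ → i ∈ s → π s x i = 0)
    (hπ_meas : ∀ s x x', (∀ i ∈ s, x i = x' i) → π s x = π s x')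
    -- a valid policy `πstar` concentrating all mass on CMI-maximizing indices
    (πstar : Finset (Fin d) → (Fin d → V) → Fin d → ℝ)
    (hπs_nonneg : ∀ s x i, 0 ≤ πstar s x i)
    (hπs_sum : ∀ s x, s ≠ Finset.univ → ∑ i, πstar s x i = 1)
    (hπs_mem : ∀ s x i, s ≠ Finset.univ → i ∈ s → πstar s x i = 0)
    (hπs_meas : ∀ s x x', (∀ i ∈ s, x i = x' i) → πstar s x = πstar s x')
    (hπs_opt : ∀ s x i, s ≠ Finset.univ → πstar s x i ≠ 0 →
      i ∉ s ∧ ∀ j, j ∉ s → cost7 p s x i ≤ cost7 p s x j) :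
    obj7 p ps (bayes7 p) πstar ≤ obj7 p ps f π ∧
    (∀ istar : Finset (Fin d) → (Fin d → V) → Fin d,
      (∀ s x, s ≠ Finset.univ → istar s x ∉ s ∧
        ∀ j, j ∉ s → j ≠ istar s x → cost7 p s x (istar s x) < cost7 p s x j) →
      obj7 p ps f π = obj7 p ps (bayes7 p) πstar →
      ∀ s x i, s ≠ Finset.univ →
        π s x i = if i = istar s x then 1 else 0) :=
  global_optimum_classification_general p hp_pos hp_sum ps hps_pos hps_univ f hf_pos hf_sum hf_meas
    π hπ_nonneg hπ_sum hπ_mem hπ_meas πstar hπs_nonneg hπs_sum hπs_meas hπs_opt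
end
end

section
/- In the regression setting with squared error loss, the global optimum of the joint objective L(f, π) = E_{x,y} E_s E_{i∼π(x_s)}[(f(x_s ∪ x_i) - y)²] is achieved by the conditional-mean predictor f*(x_s) = E[y | x_s] together with a policy placing all mass on i* = argmin_i E_{x_i | x_s}[Var(y | x_i, x_s)], assuming this argmin is unique. -/
noncomputable section

/-- The set of full feature vectors agreeing with `x` on the subset `s`. -/
def agreeSet8 {d : ℕ} {V : Type*} [Fintype V] [DecidableEq V]
    (s : Finset (Fin d)) (x : Fin d → V) : Finset (Fin d → V) :=
  Finset.univ.filter fun x' => ∀ i ∈ s, x' i = x i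

/-- Conditional pmf `p(y | x_s)` (the response `y` takes real values `g y`). -/
def condY8 {d : ℕ} {V Y : Type*} [Fintype V] [DecidableEq V] [Fintype Y]
    (p : (Fin d → V) → Y → ℝ) (s : Finset (Fin d)) (x : Fin d → V) (y : Y) : ℝ :=
  (∑ x' ∈ agreeSet8 s x, p x' y) / (∑ x' ∈ agreeSet8 s x, ∑ y', p x' y')

/-- The conditional-mean predictor `E[y | x_s]`. -/
def condMean8 {d : ℕ} {V Y : Type*} [Fintype V] [DecidableEq V] [Fintype Y]
    (p : (Fin d → V) → Y → ℝ) (g : Y → ℝ) (s : Finset (Fin d)) (x : Fin d → V) : ℝ :=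
  ∑ y, condY8 p s x y * g y

/-- The expected conditional variance of querying feature `i` given observed values `x_s`:
`E_{x_i | x_s}[Var(y | x_i, x_s)]`. -/
def costVar8 {d : ℕ} {V Y : Type*} [Fintype V] [DecidableEq V] [Fintype Y]
    (p : (Fin d → V) → Y → ℝ) (g : Y → ℝ) (s : Finset (Fin d)) (x : Fin d → V)
    (i : Fin d) : ℝ :=
  ∑ x' ∈ agreeSet8 s x,
    ((∑ y, p x' y) / (∑ x'' ∈ agreeSet8 s x, ∑ y, p x'' y)) *
      (∑ y, condY8 p (insert i s) x' y * (g y - condMean8 p g (insert i s) x') ^ 2)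

/-- The joint objective `L(f, π) = E_{x,y} E_s E_{i ∼ π(x_s)} [(f(x_s ∪ x_i) - y)²]`. -/
def obj8 {d : ℕ} {V Y : Type*} [Fintype V] [DecidableEq V] [Fintype Y]
    (p : (Fin d → V) → Y → ℝ) (g : Y → ℝ) (ps : Finset (Fin d) → ℝ)
    (f : Finset (Fin d) → (Fin d → V) → ℝ)
    (π : Finset (Fin d) → (Fin d → V) → Fin d → ℝ) : ℝ :=
  ∑ x, ∑ y, p x y * ∑ s, ps s * ∑ i, π s x i * (f (insert i s) x - g y) ^ 2

namespace Aux8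

lemma sum4_swap {A B C D : Type*} [Fintype A] [Fintype B] [Fintype C] [Fintype D]
    (F : A → B → C → D → ℝ) :
    ∑ a, ∑ b, ∑ c, ∑ d, F a b c d = ∑ c, ∑ d, ∑ a, ∑ b, F a b c d :=
  calc ∑ a, ∑ b, ∑ c, ∑ d, F a b c d
      = ∑ a, ∑ c, ∑ b, ∑ d, F a b c d :=
        Finset.sum_congr rfl (fun _ _ => Finset.sum_comm)
    _ = ∑ c, ∑ a, ∑ b, ∑ d, F a b c d := Finset.sum_comm
    _ = ∑ c, ∑ a, ∑ d, ∑ b, F a b c d :=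
        Finset.sum_congr rfl (fun _ _ =>
          Finset.sum_congr rfl (fun _ _ => Finset.sum_comm))
    _ = ∑ c, ∑ d, ∑ a, ∑ b, F a b c d :=
        Finset.sum_congr rfl (fun _ _ => Finset.sum_comm)

variable {d : ℕ} {V Y : Type*} [Fintype V] [DecidableEq V] [Fintype Y]

lemma mem_agree_iff {t : Finset (Fin d)} {x x' : Fin d → V} :
    x' ∈ agreeSet8 t x ↔ ∀ i ∈ t, x' i = x i := by simp [agreeSet8]

lemma mem_agree_self (t : Finset (Fin d)) (x : Fin d → V) : x ∈ agreeSet8 t x := by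
  simp [agreeSet8]

lemma agree_symm {t : Finset (Fin d)} {x x' : Fin d → V} (h : x' ∈ agreeSet8 t x) :
    x ∈ agreeSet8 t x' := by
  rw [mem_agree_iff] at h ⊢
  exact fun i hi => (h i hi).symm

lemma agree_eq {t : Finset (Fin d)} {x x' : Fin d → V} (h : x' ∈ agreeSet8 t x) :
    agreeSet8 t x' = agreeSet8 t x := by
  rw [mem_agree_iff] at h
  ext z
  rw [mem_agree_iff, mem_agree_iff]
  constructor
  · exact fun hz i hi => (hz i hi).trans (h i hi)
  · exact fun hz i hi => (hz i hi).trans (h i hi).symm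

lemma agree_mono {s t : Finset (Fin d)} (hst : s ⊆ t) {x x' : Fin d → V}
    (h : x' ∈ agreeSet8 t x) : x' ∈ agreeSet8 s x := by
  rw [mem_agree_iff] at h ⊢
  exact fun i hi => h i (hst hi)

/-- swap a double sum over an agreement relation -/
lemma swap_agree (t : Finset (Fin d)) (F : (Fin d → V) → (Fin d → V) → ℝ) :
    ∑ x, ∑ x' ∈ agreeSet8 t x, F x x' = ∑ x', ∑ x ∈ agreeSet8 t x', F x x' :=
  Finset.sum_comm' (fun x x' => by
    simp only [Finset.mem_univ, true_and, and_true]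
    exact ⟨fun h => agree_symm h, fun h => agree_symm h⟩)

lemma swap_agree_sub {s t : Finset (Fin d)} (hst : s ⊆ t) (x₀ : Fin d → V)
    (F : (Fin d → V) → (Fin d → V) → ℝ) :
    ∑ x' ∈ agreeSet8 s x₀, ∑ x'' ∈ agreeSet8 t x', F x' x'' =
    ∑ x'' ∈ agreeSet8 s x₀, ∑ x' ∈ agreeSet8 t x'', F x' x'' :=
  Finset.sum_comm' (fun a b => by
    constructor
    · rintro ⟨h1, h2⟩
      have hb : b ∈ agreeSet8 s x₀ := by
        have := agree_mono hst h2
        rwa [agree_eq h1] at this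
      exact ⟨agree_symm h2, hb⟩
    · rintro ⟨h1, h2⟩
      have ha : a ∈ agreeSet8 s x₀ := by
        have := agree_mono hst h1
        rwa [agree_eq h2] at this
      exact ⟨ha, agree_symm h1⟩)

/-- marginal mass of a point -/
def py (p : (Fin d → V) → Y → ℝ) (x : Fin d → V) : ℝ := ∑ y, p x y

/-- mass of an agreement class -/
def Wt (p : (Fin d → V) → Y → ℝ) (t : Finset (Fin d)) (x : Fin d → V) : ℝ :=
  ∑ x' ∈ agreeSet8 t x, ∑ y, p x' y

/-- pointwise posterior squared loss of the conditional mean -/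
def Et (p : (Fin d → V) → Y → ℝ) (g : Y → ℝ) (t : Finset (Fin d)) (x : Fin d → V) : ℝ :=
  ∑ y, p x y * (condMean8 p g t x - g y) ^ 2

variable {p : (Fin d → V) → Y → ℝ} {g : Y → ℝ}

lemma py_pos (hp : ∀ x y, 0 < p x y) (hY : Nonempty Y) (x : Fin d → V) : 0 < py p x :=
  Finset.sum_pos (fun y _ => hp x y) Finset.univ_nonempty

lemma Wt_pos (hp : ∀ x y, 0 < p x y) (hY : Nonempty Y) (t : Finset (Fin d))
    (x : Fin d → V) : 0 < Wt p t x :=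
  Finset.sum_pos (fun x' _ => py_pos hp hY x') ⟨x, mem_agree_self t x⟩

lemma Wt_agree {t : Finset (Fin d)} {x x' : Fin d → V} (h : x' ∈ agreeSet8 t x) :
    Wt p t x' = Wt p t x := by
  unfold Wt; rw [agree_eq h]

lemma condMean_agree {t : Finset (Fin d)} {x x' : Fin d → V} (h : x' ∈ agreeSet8 t x) :
    condMean8 p g t x' = condMean8 p g t x := by
  unfold condMean8 condY8; rw [agree_eq h]

lemma condMean_def (t : Finset (Fin d)) (x : Fin d → V) :
    condMean8 p g t x = (∑ x' ∈ agreeSet8 t x, ∑ y, p x' y * g y) / Wt p t x := by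
  unfold condMean8 condY8 Wt
  simp only [div_mul_eq_mul_div, ← Finset.sum_div]
  congr 1
  rw [Finset.sum_comm]
  exact Finset.sum_congr rfl fun y _ => Finset.sum_mul _ _ _

/-- orthogonality: the residual of the conditional mean is orthogonal to every
t-measurable function. -/
lemma orth (hp : ∀ x y, 0 < p x y) (hY : Nonempty Y) (t : Finset (Fin d))
    (h : (Fin d → V) → ℝ) (hm : ∀ x x', x' ∈ agreeSet8 t x → h x' = h x) :
    ∑ x, h x * (∑ y, p x y * (condMean8 p g t x - g y)) = 0 := by
  have inner : ∀ x : Fin d → V, (∑ y, p x y * (condMean8 p g t x - g y))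
      = py p x * condMean8 p g t x - ∑ y, p x y * g y := by
    intro x
    rw [Finset.sum_congr rfl (fun y _ => mul_sub (p x y) _ _), Finset.sum_sub_distrib,
      ← Finset.sum_mul]
    rfl
  rw [Finset.sum_congr rfl fun x (_ : x ∈ Finset.univ) => by rw [inner x, mul_sub],
    Finset.sum_sub_distrib, sub_eq_zero]
  calc ∑ x, h x * (py p x * condMean8 p g t x)
      = ∑ x, ∑ x' ∈ agreeSet8 t x, h x * py p x * (∑ y, p x' y * g y) / Wt p t x := by
        refine Finset.sum_congr rfl fun x _ => ?_
        rw [condMean_def, Finset.sum_div, Finset.mul_sum, Finset.mul_sum]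
        exact Finset.sum_congr rfl fun x' _ => by ring
    _ = ∑ x', ∑ x ∈ agreeSet8 t x', h x * py p x * (∑ y, p x' y * g y) / Wt p t x :=
        swap_agree t _
    _ = ∑ x, h x * ∑ y, p x y * g y := by
        refine Finset.sum_congr rfl fun x' _ => ?_
        have : ∀ x ∈ agreeSet8 t x',
            h x * py p x * (∑ y, p x' y * g y) / Wt p t x
              = h x' * (∑ y, p x' y * g y) / Wt p t x' * py p x := by
          intro x hx
          rw [hm x' x hx, Wt_agree hx]
          ring
        rw [Finset.sum_congr rfl this, ← Finset.mul_sum]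
        have hW : (∑ x ∈ agreeSet8 t x', py p x) = Wt p t x' := rfl
        rw [hW, div_mul_cancel₀]
        exact (Wt_pos hp hY t x').ne'

/-- optimality of the conditional mean among t-measurable predictors, with
t-measurable nonnegative weights. -/
lemma quad (hp : ∀ x y, 0 < p x y) (hY : Nonempty Y) (t : Finset (Fin d))
    (w c : (Fin d → V) → ℝ) (hw : ∀ x, 0 ≤ w x)
    (hwm : ∀ x x', x' ∈ agreeSet8 t x → w x' = w x)
    (hcm : ∀ x x', x' ∈ agreeSet8 t x → c x' = c x) :
    ∑ x, w x * Et p g t x ≤ ∑ x, w x * ∑ y, p x y * (c x - g y) ^ 2 := by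
  have expand : ∀ x : Fin d → V, w x * ∑ y, p x y * (c x - g y) ^ 2
      = w x * Et p g t x + w x * ((c x - condMean8 p g t x) ^ 2 * py p x)
        + (w x * (2 * (c x - condMean8 p g t x)))
          * ∑ y, p x y * (condMean8 p g t x - g y) := by
    intro x
    have h1 : ∀ y : Y, p x y * (c x - g y) ^ 2
        = p x y * (condMean8 p g t x - g y) ^ 2
          + (c x - condMean8 p g t x) ^ 2 * p x y
          + 2 * (c x - condMean8 p g t x) * (p x y * (condMean8 p g t x - g y)) := by
      intro y; ring
    rw [Finset.sum_congr rfl fun y _ => h1 y, Finset.sum_add_distrib,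
      Finset.sum_add_distrib, ← Finset.mul_sum, ← Finset.mul_sum]
    unfold Et py
    ring
  rw [Finset.sum_congr rfl fun x _ => expand x, Finset.sum_add_distrib,
    Finset.sum_add_distrib]
  have horth : ∑ x, (w x * (2 * (c x - condMean8 p g t x)))
      * ∑ y, p x y * (condMean8 p g t x - g y) = 0 := by
    refine orth hp hY t _ fun x x' hx' => ?_
    rw [hwm x x' hx', hcm x x' hx', condMean_agree hx']
  rw [horth, add_zero]
  have hpos : 0 ≤ ∑ x, w x * ((c x - condMean8 p g t x) ^ 2 * py p x) :=
    Finset.sum_nonneg fun x _ => mul_nonneg (hw x)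
      (mul_nonneg (sq_nonneg _) (py_pos hp hY x).le)
  linarith

/-- grouping identity for s-measurable weights -/
lemma group_id (hp : ∀ x y, 0 < p x y) (hY : Nonempty Y) (s : Finset (Fin d))
    (u F : (Fin d → V) → ℝ) (hu : ∀ x x', x' ∈ agreeSet8 s x → u x' = u x) :
    ∑ x, u x * F x
      = ∑ x, u x * (py p x / Wt p s x) * ∑ x' ∈ agreeSet8 s x, F x' := by
  symm
  calc ∑ x, u x * (py p x / Wt p s x) * ∑ x' ∈ agreeSet8 s x, F x'
      = ∑ x, ∑ x' ∈ agreeSet8 s x, u x * py p x * F x' / Wt p s x := by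
        refine Finset.sum_congr rfl fun x _ => ?_
        rw [Finset.mul_sum]
        exact Finset.sum_congr rfl fun x' _ => by ring
    _ = ∑ x', ∑ x ∈ agreeSet8 s x', u x * py p x * F x' / Wt p s x := swap_agree s _
    _ = ∑ x, u x * F x := by
        refine Finset.sum_congr rfl fun x' _ => ?_
        have : ∀ x ∈ agreeSet8 s x',
            u x * py p x * F x' / Wt p s x = u x' * F x' / Wt p s x' * py p x := by
          intro x hx
          rw [hu x' x hx, Wt_agree hx]
          ring
        rw [Finset.sum_congr rfl this, ← Finset.mul_sum]
        have hW : (∑ x ∈ agreeSet8 s x', py p x) = Wt p s x' := rfl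
        rw [hW, div_mul_cancel₀]
        exact (Wt_pos hp hY s x').ne'

/-- class-summed posterior loss equals class mass times expected conditional variance -/
lemma costD (hp : ∀ x y, 0 < p x y) (hY : Nonempty Y) (s : Finset (Fin d))
    (x : Fin d → V) (i : Fin d) :
    ∑ x' ∈ agreeSet8 s x, Et p g (insert i s) x'
      = Wt p s x * costVar8 p g s x i := by
  set t := insert i s with ht
  have hst : s ⊆ t := Finset.subset_insert i s
  have hV : ∀ x' : Fin d → V,
      (∑ y, condY8 p t x' y * (g y - condMean8 p g t x') ^ 2)
        = (∑ x'' ∈ agreeSet8 t x', Et p g t x'') / Wt p t x' := by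
    intro x'
    unfold condY8 Wt
    simp only [div_mul_eq_mul_div, ← Finset.sum_div]
    congr 1
    rw [Finset.sum_congr rfl fun y (_ : y ∈ Finset.univ) => Finset.sum_mul _ _ _,
      Finset.sum_comm]
    refine Finset.sum_congr rfl fun x'' hx'' => ?_
    unfold Et
    refine Finset.sum_congr rfl fun y _ => ?_
    rw [condMean_agree hx'']
    ring
  have hcost : costVar8 p g s x i
      = ∑ x' ∈ agreeSet8 s x,
          (py p x' / Wt p s x) * ((∑ x'' ∈ agreeSet8 t x', Et p g t x'') / Wt p t x') := by
    unfold costVar8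
    exact Finset.sum_congr rfl fun x' _ => by rw [hV x']; rfl
  rw [hcost, Finset.mul_sum]
  have hWs : Wt p s x ≠ 0 := (Wt_pos hp hY s x).ne'
  have hWt : ∀ z : Fin d → V, Wt p t z ≠ 0 := fun z => (Wt_pos hp hY t z).ne'
  symm
  calc ∑ x' ∈ agreeSet8 s x,
        Wt p s x * ((py p x' / Wt p s x) * ((∑ x'' ∈ agreeSet8 t x', Et p g t x'') / Wt p t x'))
      = ∑ x' ∈ agreeSet8 s x, ∑ x'' ∈ agreeSet8 t x', py p x' / Wt p t x' * Et p g t x'' := by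
        refine Finset.sum_congr rfl fun x' _ => ?_
        rw [Finset.sum_div, Finset.mul_sum, Finset.mul_sum]
        refine Finset.sum_congr rfl fun x'' _ => ?_
        rw [show Wt p s x * (py p x' / Wt p s x * (Et p g t x'' / Wt p t x'))
            = Wt p s x / Wt p s x * (py p x' / Wt p t x' * Et p g t x'') from by ring,
          div_self hWs, one_mul]

    _ = ∑ x'' ∈ agreeSet8 s x, ∑ x' ∈ agreeSet8 t x'', py p x' / Wt p t x' * Et p g t x'' :=
        swap_agree_sub hst x _
    _ = ∑ x'' ∈ agreeSet8 s x, Et p g t x'' := by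
        refine Finset.sum_congr rfl fun x'' _ => ?_
        have : ∀ x' ∈ agreeSet8 t x'',
            py p x' / Wt p t x' * Et p g t x'' = Et p g t x'' / Wt p t x'' * py p x' := by
          intro x' hx'
          rw [Wt_agree hx']
          ring
        rw [Finset.sum_congr rfl this, ← Finset.mul_sum]
        have hW : (∑ x' ∈ agreeSet8 t x'', py p x') = Wt p t x'' := rfl
        rw [hW, div_mul_cancel₀]
        exact (Wt_pos hp hY t x'').ne'

/-- reduction of weighted posterior loss to the expected conditional variance -/
lemma sumEt (hp : ∀ x y, 0 < p x y) (hY : Nonempty Y) (s : Finset (Fin d)) (i : Fin d)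
    (u : (Fin d → V) → ℝ) (hu : ∀ x x', x' ∈ agreeSet8 s x → u x' = u x) :
    ∑ x, u x * Et p g (insert i s) x
      = ∑ x, u x * (py p x * costVar8 p g s x i) := by
  rw [group_id hp hY s u (fun x => Et p g (insert i s) x) hu]
  refine Finset.sum_congr rfl fun x _ => ?_
  rw [costD hp hY s x i]
  have hWs : Wt p s x ≠ 0 := (Wt_pos hp hY s x).ne'
  field_simp

end Aux8

/-- In the regression setting with squared error loss, the global optimum of the joint
objective over predictors and stochastic policies is achieved by the conditional-mean
predictor `f*(x_s) = E[y | x_s]` together with the policy placing all mass on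
`i* = argmin_i E_{x_i | x_s}[Var(y | x_i, x_s)]`, assuming this argmin is unique. -/
theorem global_optimum_regression
    {d : ℕ} {V Y : Type*} [Fintype V] [DecidableEq V] [Fintype Y]
    (p : (Fin d → V) → Y → ℝ) (g : Y → ℝ)
    (hp_pos : ∀ x y, 0 < p x y) (hp_sum : ∑ x, ∑ y, p x y = 1)
    (ps : Finset (Fin d) → ℝ)
    (hps_nonneg : ∀ s, 0 ≤ ps s)
    (hps_pos : ∀ s, s ≠ Finset.univ → 0 < ps s)
    (hps_univ : ps Finset.univ = 0)
    (hps_sum : ∑ s, ps s = 1)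
    -- an arbitrary valid predictor `f`, depending only on observed values
    (f : Finset (Fin d) → (Fin d → V) → ℝ)
    (hf_meas : ∀ s x x', (∀ i ∈ s, x i = x' i) → f s x = f s x')
    -- an arbitrary valid stochastic policy `π`
    (π : Finset (Fin d) → (Fin d → V) → Fin d → ℝ)
    (hπ_nonneg : ∀ s x i, 0 ≤ π s x i)
    (hπ_sum : ∀ s x, s ≠ Finset.univ → ∑ i, π s x i = 1)
    (hπ_mem : ∀ s x i, s ≠ Finset.univ → i ∈ s → π s x i = 0)
    (hπ_meas : ∀ s x x', (∀ i ∈ s, x i = x' i) → π s x = π s x')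
    -- the unique variance-minimizing index for each reachable state
    (istar : Finset (Fin d) → (Fin d → V) → Fin d)
    (histar : ∀ s x, s ≠ Finset.univ → istar s x ∉ s ∧
      ∀ j, j ∉ s → j ≠ istar s x → costVar8 p g s x (istar s x) < costVar8 p g s x j)
    (histar_meas : ∀ s x x', (∀ i ∈ s, x i = x' i) → istar s x = istar s x') :
    obj8 p g ps (condMean8 p g)
        (fun s x i => if i = istar s x then 1 else 0) ≤ obj8 p g ps f π := by
    classical
  have hY : Nonempty Y := by
    by_contra hY
    rw [not_nonempty_iff] at hY
    haveI := hY
    simp only [Finset.univ_eq_empty, Finset.sum_empty, Finset.sum_const_zero] at hp_sum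
    exact absurd hp_sum (by norm_num)
  set δ : Finset (Fin d) → (Fin d → V) → Fin d → ℝ :=
    fun s x i => if i = istar s x then 1 else 0 with hδ
  have rearr : ∀ (F : Finset (Fin d) → (Fin d → V) → ℝ)
      (pol : Finset (Fin d) → (Fin d → V) → Fin d → ℝ),
      obj8 p g ps F pol
        = ∑ s, ps s * ∑ i, ∑ x, pol s x i * ∑ y, p x y * (F (insert i s) x - g y) ^ 2 := by
    intro F pol
    unfold obj8
    simp only [Finset.mul_sum]
    rw [Aux8.sum4_swap]
    exact Finset.sum_congr rfl fun s _ => Finset.sum_congr rfl fun i _ =>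
      Finset.sum_congr rfl fun x _ => Finset.sum_congr rfl fun y _ => by ring
  rw [rearr, rearr]
  refine Finset.sum_le_sum fun s _ => ?_
  by_cases hs : s = Finset.univ
  · simp [hs, hps_univ]
  refine mul_le_mul_of_nonneg_left ?_ (hps_nonneg s)
  have hmeas_of_agree : ∀ (t : Finset (Fin d)) (x x' : Fin d → V),
      x' ∈ agreeSet8 t x → ∀ i ∈ t, x i = x' i := by
    intro t x x' h i hi
    exact ((Aux8.mem_agree_iff).mp h i hi).symm
  have hπs : ∀ i : Fin d, ∀ x x' : Fin d → V, x' ∈ agreeSet8 s x → π s x' i = π s x i := by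
    intro i x x' h
    rw [hπ_meas s x x' (hmeas_of_agree s x x' h)]
  have hδs : ∀ i : Fin d, ∀ x x' : Fin d → V, x' ∈ agreeSet8 s x → δ s x' i = δ s x i := by
    intro i x x' h
    simp only [hδ]
    rw [histar_meas s x x' (hmeas_of_agree s x x' h)]
  calc ∑ i, ∑ x, δ s x i * ∑ y, p x y * (condMean8 p g (insert i s) x - g y) ^ 2
      = ∑ i, ∑ x, δ s x i * (Aux8.py p x * costVar8 p g s x i) := by
        refine Finset.sum_congr rfl fun i _ => ?_
        exact Aux8.sumEt hp_pos hY s i _ (fun x x' h => hδs i x x' h)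
    _ = ∑ x, Aux8.py p x * ∑ i, δ s x i * costVar8 p g s x i := by
        rw [Finset.sum_comm]
        refine Finset.sum_congr rfl fun x _ => ?_
        rw [Finset.mul_sum]
        exact Finset.sum_congr rfl fun i _ => by ring
    _ = ∑ x, Aux8.py p x * costVar8 p g s x (istar s x) := by
        refine Finset.sum_congr rfl fun x _ => ?_
        congr 1
        simp only [hδ, ite_mul, one_mul, zero_mul]
        exact (Finset.sum_ite_eq' Finset.univ (istar s x) _).trans (by simp)
    _ ≤ ∑ x, Aux8.py p x * ∑ i, π s x i * costVar8 p g s x i := by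
        refine Finset.sum_le_sum fun x _ => ?_
        refine mul_le_mul_of_nonneg_left ?_ (Aux8.py_pos hp_pos hY x).le
        have h1 : costVar8 p g s x (istar s x)
            = ∑ i, π s x i * costVar8 p g s x (istar s x) := by
          rw [← Finset.sum_mul, hπ_sum s x hs, one_mul]
        rw [h1]
        refine Finset.sum_le_sum fun i _ => ?_
        by_cases hi : i ∈ s
        · rw [hπ_mem s x i hs hi]; simp
        by_cases hii : i = istar s x
        · exact le_of_eq (by rw [hii])
        · exact mul_le_mul_of_nonneg_left ((histar s x hs).2 i hi hii).le (hπ_nonneg s x i)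
    _ = ∑ i, ∑ x, π s x i * (Aux8.py p x * costVar8 p g s x i) := by
        rw [Finset.sum_comm]
        refine Finset.sum_congr rfl fun x _ => ?_
        rw [Finset.mul_sum]
        exact Finset.sum_congr rfl fun i _ => by ring
    _ = ∑ i, ∑ x, π s x i * Aux8.Et p g (insert i s) x := by
        refine Finset.sum_congr rfl fun i _ => ?_
        exact (Aux8.sumEt hp_pos hY s i _ (fun x x' h => hπs i x x' h)).symm
    _ ≤ ∑ i, ∑ x, π s x i * ∑ y, p x y * (f (insert i s) x - g y) ^ 2 := by
        refine Finset.sum_le_sum fun i _ => ?_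
        refine Aux8.quad hp_pos hY (insert i s) _ _ (fun x => hπ_nonneg s x i) ?_ ?_
        · intro x x' h
          exact hπs i x x' (Aux8.agree_mono (Finset.subset_insert i s) h)
        · intro x x' h
          exact (hf_meas (insert i s) x x' (hmeas_of_agree _ x x' h)).symm
end
end

section
/- In the joint objective over predictor and policy, the optimal predictor is independent of the policy: for every subset s and observation x_s reachable with positive probability, the predictor minimizing expected cross-entropy is p(y | x_s) regardless of which policy generated the subset, because the subset distribution is independent of (x, y) beyond the conditioning on x_s. -/
/-- Gibbs' inequality. -/
lemma gibbs_aux {Y : Type*} [Fintype Y] (q yhat : Y → ℝ)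
    (hq : ∀ y, 0 < q y) (hy : ∀ y, 0 < yhat y) (hsq : ∑ y, q y = 1)
    (hsy : ∑ y, yhat y = 1) :
    (-∑ y, q y * Real.log (q y)) ≤ -∑ y, q y * Real.log (yhat y) := by
  rw [neg_le_neg_iff]
  have key : ∑ y, q y * Real.log (yhat y) - ∑ y, q y * Real.log (q y) ≤ 0 := by
    rw [← Finset.sum_sub_distrib]
    have : ∀ y ∈ Finset.univ, q y * Real.log (yhat y) - q y * Real.log (q y)
        ≤ yhat y - q y := by
      intro y _
      rw [← mul_sub, ← Real.log_div (ne_of_gt (hy y)) (ne_of_gt (hq y))]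
      have hlog := Real.log_le_sub_one_of_pos (x := yhat y / q y)
        (div_pos (hy y) (hq y))
      calc q y * Real.log (yhat y / q y) ≤ q y * (yhat y / q y - 1) := by
            exact mul_le_mul_of_nonneg_left hlog (le_of_lt (hq y))
        _ = yhat y - q y := by rw [mul_sub, mul_div_cancel₀ _ (ne_of_gt (hq y)), mul_one]
    calc ∑ y, (q y * Real.log (yhat y) - q y * Real.log (q y))
        ≤ ∑ y, (yhat y - q y) := Finset.sum_le_sum this
      _ = 0 := by rw [Finset.sum_sub_distrib, hsq, hsy]; ring
  linarith

/-- The optimal predictor is independent of the selection policy: if subsets are selected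
by a (possibly stochastic) process `w x s` that depends on `x` only through the observed
values `x_s` (and has no access to unobserved features or `y`), then conditional on the
event that subset `s` was selected with observed values `x₀_s`, the conditional law of `y`
is the plain conditional `p(y | x_s)`; hence, by Bayes-optimality under cross-entropy, the
optimal predictor for input `(s, x_s)` is `p(y | x_s)`. -/
theorem optimal_predictor_independent_of_policy
    {d : ℕ} {V Y : Type*} [Fintype V] [DecidableEq V] [Fintype Y] [Nonempty Y]
    (p : (Fin d → V) → Y → ℝ)
    (hpos : ∀ x y, 0 < p x y) (hsum : ∑ x, ∑ y, p x y = 1)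
    (w : (Fin d → V) → Finset (Fin d) → ℝ)
    (hw_nonneg : ∀ x s, 0 ≤ w x s)
    (hw_sum : ∀ x, ∑ s, w x s = 1)
    (hw_meas : ∀ s x x', (∀ i ∈ s, x i = x' i) → w x s = w x' s)
    (s : Finset (Fin d)) (x₀ : Fin d → V) (hw_pos : 0 < w x₀ s) :
    (∀ y,
      (∑ x ∈ Finset.univ.filter fun x => ∀ i ∈ s, x i = x₀ i, w x s * p x y) /
        (∑ x ∈ Finset.univ.filter fun x => ∀ i ∈ s, x i = x₀ i, w x s * ∑ y', p x y') =
      (∑ x ∈ Finset.univ.filter fun x => ∀ i ∈ s, x i = x₀ i, p x y) /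
        (∑ x ∈ Finset.univ.filter fun x => ∀ i ∈ s, x i = x₀ i, ∑ y', p x y')) ∧
    (∀ yhat : Y → ℝ, (∀ y, 0 < yhat y) → (∑ y, yhat y) = 1 →
      (-∑ y, ((∑ x ∈ Finset.univ.filter fun x => ∀ i ∈ s, x i = x₀ i, p x y) /
          (∑ x ∈ Finset.univ.filter fun x => ∀ i ∈ s, x i = x₀ i, ∑ y', p x y')) *
        Real.log ((∑ x ∈ Finset.univ.filter fun x => ∀ i ∈ s, x i = x₀ i, p x y) /
          (∑ x ∈ Finset.univ.filter fun x => ∀ i ∈ s, x i = x₀ i, ∑ y', p x y'))) ≤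
      (-∑ y, ((∑ x ∈ Finset.univ.filter fun x => ∀ i ∈ s, x i = x₀ i, p x y) /
          (∑ x ∈ Finset.univ.filter fun x => ∀ i ∈ s, x i = x₀ i, ∑ y', p x y')) *
        Real.log (yhat y))) := by
  set A : Finset (Fin d → V) := Finset.univ.filter fun x => ∀ i ∈ s, x i = x₀ i with hA
  have hwconst : ∀ x ∈ A, w x s = w x₀ s := by
    intro x hx
    rw [hA, Finset.mem_filter] at hx
    exact hw_meas s x x₀ hx.2
  have hfactor : ∀ f : (Fin d → V) → ℝ,
      ∑ x ∈ A, w x s * f x = w x₀ s * ∑ x ∈ A, f x := by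
    intro f
    rw [Finset.mul_sum]
    exact Finset.sum_congr rfl fun x hx => by rw [hwconst x hx]
  have hx₀A : x₀ ∈ A := by
    rw [hA, Finset.mem_filter]; exact ⟨Finset.mem_univ _, fun i _ => rfl⟩
  have hdenpos : 0 < ∑ x ∈ A, ∑ y', p x y' :=
    Finset.sum_pos (fun x _ => Finset.sum_pos (fun y _ => hpos x y) Finset.univ_nonempty)
      ⟨x₀, hx₀A⟩
  constructor
  · intro y
    rw [hfactor, hfactor, mul_div_mul_left _ _ (ne_of_gt hw_pos)]
  · intro yhat hyhat hyhat_sum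
    set q : Y → ℝ := fun y => (∑ x ∈ A, p x y) / (∑ x ∈ A, ∑ y', p x y') with hq
    have hqpos : ∀ y, 0 < q y := fun y =>
      div_pos (Finset.sum_pos (fun x _ => hpos x y) ⟨x₀, hx₀A⟩) hdenpos
    have hqsum : ∑ y, q y = 1 := by
      rw [hq]
      simp only
      rw [← Finset.sum_div, Finset.sum_comm, div_self (ne_of_gt hdenpos)]
    exact gibbs_aux q yhat hqpos hyhat hqsum hyhat_sum
end
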